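/- arXiv:1712.00266 — 3 statements merged into one kernel-verified Lean document; each statement's English description precedes it below -/
import Mathlib

section
/- Assume (Hf). Let Φ₀ : ℝ → ℝⁿ be bounded and C¹ with ∂ξΦ₀ ∈ L² and f(Φ₀) ∈ L². Then there exists K > 0, depending only on f and Φ₀ and not on Φ, such that for every Φ with Φ − Φ₀ ∈ H¹ and ‖Φ − Φ₀‖_{H¹} ≤ 1, every v ∈ H¹ and every ψ ∈ H¹: ‖f(Φ+v)‖_{L²} ≤ K(1 + ‖v‖_{H¹}² ‖v‖_{L²}) and |⟨f(Φ+v), ψ⟩_{L²}| ≤ K(1 + ‖v‖_{H¹} ‖v‖_{L²}²) ‖ψ‖_{H¹}. -/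
open MeasureTheory

noncomputable section

abbrev En (n : ℕ) : Type := EuclideanSpace ℝ (Fin n)

/-- membership in `L²(ℝ;ℝⁿ)` -/
def memL2 {n : ℕ} (f : ℝ → En n) : Prop := MemLp f 2 volume

/-- the `L²` norm -/
def l2norm {n : ℕ} (f : ℝ → En n) : ℝ := (eLpNorm f 2 volume).toReal

/-- the `L²` inner product -/
def l2inner {n : ℕ} (f g : ℝ → En n) : ℝ := ∫ ξ, (inner ℝ (f ξ) (g ξ) : ℝ)

/-- `f` is locally absolutely continuous with derivative `f'` -/
def hasWeakDeriv {n : ℕ} (f f' : ℝ → En n) : Prop :=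
  LocallyIntegrable f' volume ∧ ∀ x y : ℝ, f y - f x = ∫ t in x..y, f' t

/-- membership in `H¹`, with the derivative recorded explicitly -/
def memH1 {n : ℕ} (f f' : ℝ → En n) : Prop :=
  hasWeakDeriv f f' ∧ memL2 f ∧ memL2 f'

/-- the `H¹` norm -/
def h1norm {n : ℕ} (f f' : ℝ → En n) : ℝ :=
  Real.sqrt ((l2norm f)^2 + (l2norm f')^2)

/-- membership in `H²`, with both derivatives recorded explicitly -/
def memH2 {n : ℕ} (f f' f'' : ℝ → En n) : Prop :=
  memH1 f f' ∧ memH1 f' f''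

/-- the `H²` norm -/
def h2norm {n : ℕ} (f f' f'' : ℝ → En n) : ℝ :=
  Real.sqrt ((l2norm f)^2 + (l2norm f')^2 + (l2norm f'')^2)

/-!
Since `D³f` is bounded, `Df` grows at most quadratically, so by the mean value theorem
`‖f (u + w) - f u‖ ≤ C (1 + ‖u‖ + ‖u + w‖)² ‖w‖`. On the line, `H¹ ⊂ L^∞` with
`‖v ξ‖² ≤ 4 ‖v‖_{L²} ‖v'‖_{L²}`; this bounds `p` uniformly and `‖v‖²_∞` by `‖v‖_{L²} ‖v‖_{H¹}`.
Pointwise, `|f(Φ₀ + p + v)| ≤ |f Φ₀| + c (|p| + |v|) + c |v|² (|p| + |v|)`. In `L²` the cubic term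
is handled by pulling out `‖v‖²_∞`; against `ψ` by pulling out `‖ψ‖_∞ ≤ 2 ‖ψ‖_{H¹}` and
`‖p‖_∞ + ‖v‖_∞`, which leaves `∫ |v|² = ‖v‖²_{L²}`.
-/

open scoped ENNReal

section PolynomialGrowth

variable {V W : Type*} [NormedAddCommGroup V] [NormedSpace ℝ V]
  [NormedAddCommGroup W] [NormedSpace ℝ W]

theorem norm_sub_le_of_norm_fderiv_le_mul_pow {g : V → W} (hg : Differentiable ℝ g) {C : ℝ}
    {k : ℕ} (hC : ∀ x, ‖fderiv ℝ g x‖ ≤ C * (1 + ‖x‖) ^ k) (a b : V) :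
    ‖g b - g a‖ ≤ C * (1 + ‖a‖ + ‖b‖) ^ k * ‖b - a‖ := by
  have hC0 : 0 ≤ C := nonneg_of_mul_nonneg_left ((norm_nonneg _).trans (hC a)) (by positivity)
  have hmem : ∀ y, ‖y‖ ≤ ‖a‖ + ‖b‖ → y ∈ Metric.closedBall (0 : V) (‖a‖ + ‖b‖) := fun y hy =>
    mem_closedBall_zero_iff.2 hy
  refine (convex_closedBall (0 : V) _).norm_image_sub_le_of_norm_fderiv_le (fun x _ => hg x)
    (fun x hx => (hC x).trans ?_) (hmem a (by simp)) (hmem b (by simp))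
  rw [mem_closedBall_zero_iff] at hx
  exact mul_le_mul_of_nonneg_left (pow_le_pow_left₀ (by positivity) (by linarith) k) hC0

theorem norm_le_of_norm_fderiv_le_mul_pow {g : V → W} (hg : Differentiable ℝ g) {C : ℝ} {k : ℕ}
    (hC : ∀ x, ‖fderiv ℝ g x‖ ≤ C * (1 + ‖x‖) ^ k) (x : V) :
    ‖g x‖ ≤ (‖g 0‖ + C) * (1 + ‖x‖) ^ (k + 1) := by
  have hsub := norm_sub_le_of_norm_fderiv_le_mul_pow hg hC 0 x
  simp only [norm_zero, add_zero, sub_zero] at hsub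
  calc ‖g x‖ ≤ ‖g 0‖ + ‖g x - g 0‖ := norm_le_insert' _ _
    _ ≤ ‖g 0‖ * (1 + ‖x‖) ^ (k + 1) + C * (1 + ‖x‖) ^ k * (1 + ‖x‖) := by
        gcongr
        · exact le_mul_of_one_le_right (norm_nonneg _) (one_le_pow₀ (by simp))
        · exact hsub.trans (mul_le_mul_of_nonneg_left (by linarith) ((norm_nonneg _).trans (hC x)))
    _ = (‖g 0‖ + C) * (1 + ‖x‖) ^ (k + 1) := by ring

theorem exists_norm_iteratedFDeriv_le_mul_pow {N : ℕ} {f : V → W} (hf : ContDiff ℝ N f) {K : ℝ}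
    (hK : ∀ x, ‖iteratedFDeriv ℝ N f x‖ ≤ K) :
    ∀ m ≤ N, ∃ C, ∀ x, ‖iteratedFDeriv ℝ (N - m) f x‖ ≤ C * (1 + ‖x‖) ^ m := by
  intro m hm
  induction m with
  | zero => exact ⟨K, by simpa using hK⟩
  | succ m ih =>
    obtain ⟨C, hC⟩ := ih (by omega)
    have hN : N - m = N - (m + 1) + 1 := by omega
    refine ⟨_, norm_le_of_norm_fderiv_le_mul_pow (C := C)
      (hf.differentiable_iteratedFDeriv (by norm_cast; omega)) fun x => ?_⟩
    rw [norm_fderiv_iteratedFDeriv, ← hN]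
    exact hC x

theorem exists_norm_sub_le_mul_pow {k : ℕ} {f : V → W} (hf : ContDiff ℝ (k + 1) f) {K : ℝ}
    (hK : ∀ x, ‖iteratedFDeriv ℝ (k + 1) f x‖ ≤ K) :
    ∃ C, 0 ≤ C ∧ ∀ a b, ‖f b - f a‖ ≤ C * (1 + ‖a‖ + ‖b‖) ^ k * ‖b - a‖ := by
  obtain ⟨C, hC⟩ := exists_norm_iteratedFDeriv_le_mul_pow (by exact_mod_cast hf) hK k (by omega)
  rw [Nat.add_sub_cancel_left] at hC
  refine ⟨C, nonneg_of_mul_nonneg_left ((norm_nonneg _).trans (hC 0)) (by simp),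
    norm_sub_le_of_norm_fderiv_le_mul_pow (hf.differentiable (by simp)) fun x => ?_⟩
  rw [← norm_iteratedFDeriv_one]
  exact hC x

end PolynomialGrowth

section LpBounds

variable {α : Type*} [MeasurableSpace α] {μ : Measure α}
  {E F G : Type*} [NormedAddCommGroup E] [NormedAddCommGroup F] [NormedAddCommGroup G]

theorem integral_norm_mul_norm_le_lpNorm_mul_lpNorm {f : α → E} {g : α → F}
    (hf : MemLp f 2 μ) (hg : MemLp g 2 μ) :
    ∫ x, ‖f x‖ * ‖g x‖ ∂μ ≤ lpNorm f 2 μ * lpNorm g 2 μ := by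
  have h := integral_mul_norm_le_Lp_mul_Lq (μ := μ) (f := fun x => ‖f x‖) (g := fun x => ‖g x‖)
    Real.HolderConjugate.two_two (by simpa using hf.norm) (by simpa using hg.norm)
  rw [lpNorm_eq_integral_norm_rpow_toReal two_ne_zero ENNReal.ofNat_ne_top hf.1,
    lpNorm_eq_integral_norm_rpow_toReal two_ne_zero ENNReal.ofNat_ne_top hg.1]
  simpa using h

theorem integral_norm_sq_eq_lpNorm_sq {f : α → E} (hf : MemLp f 2 μ) :
    ∫ x, ‖f x‖ ^ 2 ∂μ = lpNorm f 2 μ ^ 2 := by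
  rw [lpNorm_eq_integral_norm_rpow_toReal two_ne_zero ENNReal.ofNat_ne_top hf.1,
    ← Real.rpow_natCast,
    ← Real.rpow_mul (integral_nonneg fun x => Real.rpow_nonneg (norm_nonneg _) _)]
  simp

theorem setIntegral_norm_le_sqrt_mul_lpNorm {f : α → E} (hf : MemLp f 2 μ) {s : Set α}
    (hs : μ s ≠ ⊤) : ∫ x in s, ‖f x‖ ∂μ ≤ √(μ.real s) * lpNorm f 2 μ := by
  have : IsFiniteMeasure (μ.restrict s) := isFiniteMeasure_restrict.2 hs
  have h := integral_norm_mul_norm_le_lpNorm_mul_lpNorm (hf.restrict s)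
    (memLp_const (1 : ℝ) (μ := μ.restrict s))
  have hmono : lpNorm f 2 (μ.restrict s) ≤ lpNorm f 2 μ := by
    rw [← toReal_eLpNorm hf.1, ← toReal_eLpNorm hf.1.restrict]
    exact ENNReal.toReal_mono hf.2.ne (eLpNorm_mono_measure f Measure.restrict_le_self)
  rw [lpNorm_const' two_ne_zero ENNReal.ofNat_ne_top] at h
  simp only [norm_one, mul_one, one_mul, measureReal_restrict_apply_univ, ENNReal.toReal_ofNat]
    at h
  rw [Real.sqrt_eq_rpow, one_div, mul_comm]
  exact h.trans (mul_le_mul_of_nonneg_right hmono (by positivity))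

theorem toReal_eLpNorm_le_of_norm_le_add_mul {p : ℝ≥0∞} (hp : 1 ≤ p) {Ψ : α → E} {g : α → F}
    {u v : α → G} (hg : MemLp g p μ) (hu : MemLp u p μ) (hv : MemLp v p μ) {M : ℝ} (hM : 0 ≤ M)
    (hΨ : ∀ x, ‖Ψ x‖ ≤ ‖g x‖ + M * (‖u x‖ + ‖v x‖)) :
    (eLpNorm Ψ p μ).toReal ≤ lpNorm g p μ + M * (lpNorm u p μ + lpNorm v p μ) := by
  have huv : MemLp (fun x => ‖u x‖ + ‖v x‖) p μ := hu.norm.add hv.norm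
  have hR : MemLp (fun x => ‖g x‖ + M * (‖u x‖ + ‖v x‖)) p μ := hg.norm.add (huv.const_mul M)
  calc (eLpNorm Ψ p μ).toReal ≤ lpNorm (fun x => ‖g x‖ + M * (‖u x‖ + ‖v x‖)) p μ := by
        rw [← toReal_eLpNorm hR.1]
        exact ENNReal.toReal_mono hR.2.ne (eLpNorm_mono_real hΨ)
    _ ≤ lpNorm (fun x => ‖g x‖) p μ + lpNorm (M • fun x => ‖u x‖ + ‖v x‖) p μ :=
        lpNorm_add_le hg.norm hp
    _ ≤ lpNorm g p μ + M * (lpNorm (fun x => ‖u x‖) p μ + lpNorm (fun x => ‖v x‖) p μ) := by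
        rw [lpNorm_norm hg.1, lpNorm_const_smul, Real.nnnorm_of_nonneg hM]
        exact add_le_add_right (mul_le_mul_of_nonneg_left (lpNorm_add_le hu.norm hp) hM) _
    _ = lpNorm g p μ + M * (lpNorm u p μ + lpNorm v p μ) := by
        rw [lpNorm_norm hu.1, lpNorm_norm hv.1]

theorem abs_integral_inner_le_of_norm_le_add [InnerProductSpace ℝ E] {Ψ φ : α → E}
    {g h : α → ℝ} {S : ℝ}
    (hg : MemLp g 2 μ) (hφ : MemLp φ 2 μ) (hh : Integrable h μ) (hh0 : ∀ x, 0 ≤ h x)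
    (hφS : ∀ x, ‖φ x‖ ≤ S) (hΨ : ∀ x, ‖Ψ x‖ ≤ g x + h x) :
    |∫ x, inner ℝ (Ψ x) (φ x) ∂μ| ≤ lpNorm g 2 μ * lpNorm φ 2 μ + S * ∫ x, h x ∂μ := by
  have hgφ : Integrable (fun x => ‖g x‖ * ‖φ x‖) μ := hg.norm.integrable_mul hφ.norm
  have hpt : ∀ x, |inner ℝ (Ψ x) (φ x)| ≤ ‖g x‖ * ‖φ x‖ + S * h x := fun x =>
    calc |inner ℝ (Ψ x) (φ x)| ≤ (g x + h x) * ‖φ x‖ :=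
          (abs_real_inner_le_norm _ _).trans (by gcongr; exact hΨ x)
      _ ≤ ‖g x‖ * ‖φ x‖ + S * h x := by
          rw [add_mul, mul_comm S]
          gcongr
          exacts [le_abs_self _, hh0 x, hφS x]
  calc |∫ x, inner ℝ (Ψ x) (φ x) ∂μ| ≤ ∫ x, |inner ℝ (Ψ x) (φ x)| ∂μ := abs_integral_le_integral_abs
    _ ≤ ∫ x, (‖g x‖ * ‖φ x‖ + S * h x) ∂μ :=
        integral_mono_of_nonneg (.of_forall fun x => abs_nonneg _) (hgφ.add (hh.const_mul S))
          (.of_forall hpt)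
    _ = ∫ x, ‖g x‖ * ‖φ x‖ ∂μ + S * ∫ x, h x ∂μ := by
        rw [integral_add hgφ (hh.const_mul S), integral_const_mul]
    _ ≤ lpNorm g 2 μ * lpNorm φ 2 μ + S * ∫ x, h x ∂μ := by
        grw [integral_norm_mul_norm_le_lpNorm_mul_lpNorm hg hφ]

end LpBounds

section SobolevEmbedding

variable {n : ℕ}

theorem l2norm_nonneg (u : ℝ → En n) : 0 ≤ l2norm u := ENNReal.toReal_nonneg

theorem l2norm_eq_lpNorm {u : ℝ → En n} (hu : memL2 u) : l2norm u = lpNorm u 2 volume :=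
  toReal_eLpNorm hu.1

theorem l2norm_le_h1norm (v v' : ℝ → En n) : l2norm v ≤ h1norm v v' :=
  Real.le_sqrt_of_sq_le (le_add_of_nonneg_right (sq_nonneg _))

theorem l2norm_deriv_le_h1norm (v v' : ℝ → En n) : l2norm v' ≤ h1norm v v' :=
  Real.le_sqrt_of_sq_le (le_add_of_nonneg_left (sq_nonneg _))

variable {v v' : ℝ → En n}

theorem hasWeakDeriv.norm_le_add_setIntegral (hv : hasWeakDeriv v v') {a s ξ : ℝ}
    (hs : s ∈ Set.Icc a ξ) : ‖v ξ‖ ≤ ‖v s‖ + ∫ r in Set.Icc a ξ, ‖v' r‖ := by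
  have hint : IntegrableOn (fun r => ‖v' r‖) (Set.Icc a ξ) :=
    (hv.1.integrableOn_isCompact isCompact_Icc).norm
  calc ‖v ξ‖ ≤ ‖v s‖ + ‖v ξ - v s‖ := norm_le_insert' _ _
    _ = ‖v s‖ + ‖∫ r in Set.Ioc s ξ, v' r‖ := by
        rw [hv.2 s ξ, intervalIntegral.integral_of_le hs.2]
    _ ≤ ‖v s‖ + ∫ r in Set.Icc a ξ, ‖v' r‖ := by
        grw [norm_integral_le_integral_norm]
        exact add_le_add le_rfl (setIntegral_mono_set hint (.of_forall fun r => norm_nonneg _)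
          (Set.Ioc_subset_Icc_self.trans (Set.Icc_subset_Icc_left hs.1)).eventuallyLE)

/-- Average `‖v ξ‖ ≤ ‖v s‖ + ∫ ‖v'‖` over `s ∈ [ξ - t², ξ]`, then apply Cauchy–Schwarz on that
interval. -/
theorem memH1.mul_norm_le (hv : memH1 v v') (ξ : ℝ) {t : ℝ} (ht : 0 < t) :
    t * ‖v ξ‖ ≤ l2norm v + t ^ 2 * l2norm v' := by
  obtain ⟨hwd, hv2, hv'2⟩ := hv
  set I := Set.Icc (ξ - t ^ 2) ξ
  have hIfin : volume I ≠ ⊤ := isCompact_Icc.measure_lt_top.ne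
  have hI : volume.real I = t ^ 2 := by simp [I, ht.le]
  have hsqrt : √(volume.real I) = t := by rw [hI, Real.sqrt_sq ht.le]
  have hvI := setIntegral_norm_le_sqrt_mul_lpNorm hv2 hIfin
  have hv'I := setIntegral_norm_le_sqrt_mul_lpNorm hv'2 hIfin
  rw [hsqrt, ← l2norm_eq_lpNorm hv2] at hvI
  rw [hsqrt, ← l2norm_eq_lpNorm hv'2] at hv'I
  set J := ∫ r in I, ‖v' r‖
  have hJ : IntegrableOn (fun _ => J) I := integrableOn_const hIfin
  have hvint : IntegrableOn (fun s => ‖v s‖) I := by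
    have : IsFiniteMeasure (volume.restrict I) := isFiniteMeasure_restrict.2 hIfin
    exact ((hv2.restrict I).integrable one_le_two).norm
  have havg : t ^ 2 * ‖v ξ‖ ≤ (∫ s in I, ‖v s‖) + t ^ 2 * J := by
    have h : ∫ _ in I, ‖v ξ‖ ≤ ∫ s in I, (‖v s‖ + J) :=
      setIntegral_mono_on (integrableOn_const hIfin) (hvint.add hJ) measurableSet_Icc
        fun s hs => hwd.norm_le_add_setIntegral hs
    rwa [setIntegral_const, integral_add hvint hJ, setIntegral_const, hI, smul_eq_mul,
      smul_eq_mul] at h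
  refine le_of_mul_le_mul_left ?_ ht
  have := mul_le_mul_of_nonneg_left hv'I (sq_nonneg t)
  linarith

/-- `t ↦ l2norm v' * t² - ‖v ξ‖ * t + l2norm v` is nonnegative on all of `ℝ` (for `t ≤ 0`
trivially), so its discriminant is `≤ 0`. -/
theorem memH1.norm_sq_le (hv : memH1 v v') (ξ : ℝ) :
    ‖v ξ‖ ^ 2 ≤ 4 * l2norm v * l2norm v' := by
  have h := discrim_le_zero (a := l2norm v') (b := -‖v ξ‖) (c := l2norm v) fun t => by
    rcases lt_or_ge 0 t with ht | ht
    · nlinarith [hv.mul_norm_le ξ ht]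
    · nlinarith [norm_nonneg (v ξ), l2norm_nonneg v, l2norm_nonneg v', mul_self_nonneg t]
  rw [discrim] at h
  linarith

theorem memH1.norm_le_two_mul_h1norm (hv : memH1 v v') (ξ : ℝ) : ‖v ξ‖ ≤ 2 * h1norm v v' := by
  have h := hv.norm_sq_le ξ
  have h1 := l2norm_le_h1norm v v'
  have h2 := l2norm_deriv_le_h1norm v v'
  nlinarith [norm_nonneg (v ξ), l2norm_nonneg v, l2norm_nonneg v']

theorem memH1.norm_sq_le_four_mul_l2norm_mul_h1norm (hv : memH1 v v') (ξ : ℝ) :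
    ‖v ξ‖ ^ 2 ≤ 4 * l2norm v * h1norm v v' :=
  (hv.norm_sq_le ξ).trans
    (mul_le_mul_of_nonneg_left (l2norm_deriv_le_h1norm v v') (by linarith [l2norm_nonneg v]))

end SobolevEmbedding

section PointwiseBound

variable {V W : Type*} [NormedAddCommGroup V] [NormedAddCommGroup W]

theorem norm_map_add_add_le {f : V → W} {C : ℝ} (hC : 0 ≤ C)
    (hf : ∀ a b, ‖f b - f a‖ ≤ C * (1 + ‖a‖ + ‖b‖) ^ 2 * ‖b - a‖) {B : ℝ} {u p w : V}
    (hu : ‖u‖ ≤ B) (hp : ‖p‖ ≤ 2) :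
    ‖f (u + p + w)‖ ≤ ‖f u‖ + 2 * C * (3 + 2 * B) ^ 2 * (‖p‖ + ‖w‖)
      + 2 * C * ‖w‖ ^ 2 * (‖p‖ + ‖w‖) := by
  have hsum : 1 + ‖u‖ + ‖u + p + w‖ ≤ (3 + 2 * B) + ‖w‖ := by
    linarith [norm_add₃_le (a := u) (b := p) (c := w)]
  have hsq : (1 + ‖u‖ + ‖u + p + w‖) ^ 2 ≤ 2 * (3 + 2 * B) ^ 2 + 2 * ‖w‖ ^ 2 := by
    nlinarith [sq_nonneg (3 + 2 * B - ‖w‖), norm_nonneg u, norm_nonneg (u + p + w)]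
  have hdiff : u + p + w - u = p + w := by abel
  calc ‖f (u + p + w)‖ ≤ ‖f u‖ + ‖f (u + p + w) - f u‖ := norm_le_insert' _ _
    _ ≤ ‖f u‖ + C * (2 * (3 + 2 * B) ^ 2 + 2 * ‖w‖ ^ 2) * (‖p‖ + ‖w‖) := by
        grw [hf u, hdiff, hsq, norm_add_le]
    _ = _ := by ring

end PointwiseBound

section ScalarBounds

variable {A C c a N P : ℝ}

theorem cubic_bound_l2_coeff_le (hA : 0 ≤ A) (hC : 0 ≤ C) (ha : 0 ≤ a) (haN : a ≤ N)
    (hP : P ≤ 1) :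
    A + (2 * C * c ^ 2 + 8 * C * a * N) * (P + a) ≤
      (A + 4 * C * c ^ 2 + 16 * C) * (1 + N ^ 2 * a) := by
  have hN : 0 ≤ N := ha.trans haN
  have h1 : a ≤ 1 + N ^ 2 * a := by rcases le_or_gt a 1 with h | h <;> nlinarith
  have h2 : a * N ≤ 1 + N ^ 2 * a := by rcases le_or_gt N 1 with h | h <;> nlinarith
  have h3 : a ^ 2 * N ≤ N ^ 2 * a := by nlinarith [mul_nonneg (mul_nonneg ha hN) (sub_nonneg.2 haN)]
  have hc : 0 ≤ C * c ^ 2 := by positivity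
  have hNa : 0 ≤ N ^ 2 * a := by positivity
  nlinarith [mul_le_mul_of_nonneg_left h1 hc, mul_le_mul_of_nonneg_left h2 hC,
    mul_le_mul_of_nonneg_left h3 hC, mul_nonneg hA hNa, mul_nonneg hc hNa, mul_nonneg hC hNa,
    mul_le_mul_of_nonneg_left hP (by positivity : 0 ≤ 2 * C * c ^ 2 + 8 * C * a * N)]

theorem cubic_bound_pairing_coeff_le {L Ψ Nψ : ℝ} (hA : 0 ≤ A) (hC : 0 ≤ C) (ha : 0 ≤ a)
    (haN : a ≤ N) (hP : P ≤ 1) (hΨ0 : 0 ≤ Ψ) (hΨ : Ψ ≤ Nψ) (hL : L ≤ A + 2 * C * c ^ 2 * (P + a)) :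
    L * Ψ + 2 * Nψ * (4 * C * (1 + N) * a ^ 2) ≤
      (A + 4 * C * c ^ 2 + 16 * C) * (1 + N * a ^ 2) * Nψ := by
  have hN : 0 ≤ N := ha.trans haN
  have h1 : a ≤ 1 + N * a ^ 2 := by rcases le_or_gt a 1 with h | h <;> nlinarith
  have h2 : a ^ 2 ≤ 1 + N * a ^ 2 := by rcases le_or_gt a 1 with h | h <;> nlinarith
  have hc : 0 ≤ C * c ^ 2 := by positivity
  have hNa : 0 ≤ N * a ^ 2 := by positivity
  have hL' : L ≤ (A + 4 * C * c ^ 2) * (1 + N * a ^ 2) := by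
    nlinarith [mul_le_mul_of_nonneg_left h1 hc, mul_nonneg hA hNa, mul_nonneg hc hNa]
  have hcubic : 4 * C * (1 + N) * a ^ 2 ≤ 8 * C * (1 + N * a ^ 2) := by
    nlinarith [mul_le_mul_of_nonneg_left h2 hC, mul_nonneg hC hNa]
  have hpos : 0 ≤ (A + 4 * C * c ^ 2) * (1 + N * a ^ 2) := by positivity
  nlinarith [mul_le_mul hL' hΨ hΨ0 hpos, mul_le_mul_of_nonneg_left hcubic (hΨ0.trans hΨ)]

end ScalarBounds

section CompositionBounds

variable {n : ℕ} {F G p p' v v' : ℝ → En n} {C c : ℝ}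

theorem l2norm_le_of_cubic_bound (hC : 0 ≤ C) (hG : memL2 G) (hp : memH1 p p')
    (hp1 : h1norm p p' ≤ 1) (hv : memH1 v v')
    (hF : ∀ ξ, ‖F ξ‖ ≤ ‖G ξ‖ + 2 * C * c ^ 2 * (‖p ξ‖ + ‖v ξ‖)
      + 2 * C * ‖v ξ‖ ^ 2 * (‖p ξ‖ + ‖v ξ‖)) :
    l2norm F ≤ (l2norm G + 4 * C * c ^ 2 + 16 * C) * (1 + h1norm v v' ^ 2 * l2norm v) := by
  set a := l2norm v
  set N := h1norm v v'
  have ha : 0 ≤ a := l2norm_nonneg v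
  have haN : a ≤ N := l2norm_le_h1norm v v'
  have hN : 0 ≤ N := ha.trans haN
  have hM : 0 ≤ 2 * C * c ^ 2 + 8 * C * a * N := by positivity
  have h := toReal_eLpNorm_le_of_norm_le_add_mul one_le_two hG hp.2.1 hv.2.1 hM fun ξ =>
    (hF ξ).trans <| by
      have hs : 0 ≤ ‖p ξ‖ + ‖v ξ‖ := by positivity
      nlinarith [mul_le_mul_of_nonneg_left (hv.norm_sq_le_four_mul_l2norm_mul_h1norm ξ)
        (mul_nonneg hC hs)]
  rw [← l2norm_eq_lpNorm hG, ← l2norm_eq_lpNorm hp.2.1, ← l2norm_eq_lpNorm hv.2.1] at h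
  exact h.trans (cubic_bound_l2_coeff_le (l2norm_nonneg G) hC ha haN
    ((l2norm_le_h1norm p p').trans hp1))

theorem abs_l2inner_le_of_cubic_bound {ψ ψ' : ℝ → En n} (hC : 0 ≤ C) (hG : memL2 G)
    (hp : memH1 p p') (hp1 : h1norm p p' ≤ 1) (hv : memH1 v v') (hψ : memH1 ψ ψ')
    (hF : ∀ ξ, ‖F ξ‖ ≤ ‖G ξ‖ + 2 * C * c ^ 2 * (‖p ξ‖ + ‖v ξ‖)
      + 2 * C * ‖v ξ‖ ^ 2 * (‖p ξ‖ + ‖v ξ‖)) :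
    |l2inner F ψ| ≤
      (l2norm G + 4 * C * c ^ 2 + 16 * C) * (1 + h1norm v v' * l2norm v ^ 2) * h1norm ψ ψ' := by
  set a := l2norm v
  set N := h1norm v v'
  have ha : 0 ≤ a := l2norm_nonneg v
  have haN : a ≤ N := l2norm_le_h1norm v v'
  have hN : 0 ≤ N := ha.trans haN
  set g := fun ξ => ‖G ξ‖ + 2 * C * c ^ 2 * (‖p ξ‖ + ‖v ξ‖)
  have hg : MemLp g 2 volume := hG.norm.add ((hp.2.1.norm.add hv.2.1.norm).const_mul _)
  have hgnorm : lpNorm g 2 volume ≤ l2norm G + 2 * C * c ^ 2 * (l2norm p + a) := by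
    have h := toReal_eLpNorm_le_of_norm_le_add_mul one_le_two hG hp.2.1 hv.2.1 (by positivity)
      fun ξ => (Real.norm_of_nonneg (by positivity : 0 ≤ g ξ)).le
    rwa [toReal_eLpNorm hg.1, ← l2norm_eq_lpNorm hG, ← l2norm_eq_lpNorm hp.2.1,
      ← l2norm_eq_lpNorm hv.2.1] at h
  have hh : Integrable (fun ξ => 4 * C * (1 + N) * ‖v ξ‖ ^ 2) volume :=
    (hv.2.1.integrable_norm_pow two_ne_zero).const_mul _
  have h := abs_integral_inner_le_of_norm_le_add hg hψ.2.1 hh (fun ξ => by positivity)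
    hψ.norm_le_two_mul_h1norm fun ξ => (hF ξ).trans <| by
      have hpv : ‖p ξ‖ + ‖v ξ‖ ≤ 2 * (1 + N) := by
        linarith [hp.norm_le_two_mul_h1norm ξ, hv.norm_le_two_mul_h1norm ξ]
      have := mul_le_mul_of_nonneg_left hpv (by positivity : 0 ≤ 2 * C * ‖v ξ‖ ^ 2)
      simp only [g]
      linarith
  rw [integral_const_mul, integral_norm_sq_eq_lpNorm_sq hv.2.1, ← l2norm_eq_lpNorm hv.2.1,
    ← l2norm_eq_lpNorm hψ.2.1] at h
  exact h.trans (cubic_bound_pairing_coeff_le (l2norm_nonneg G) hC ha haN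
    ((l2norm_le_h1norm p p').trans hp1) (l2norm_nonneg ψ) (l2norm_le_h1norm ψ ψ') hgnorm)

end CompositionBounds

theorem statement1_general {n : ℕ} (f : En n → En n)
    (hf : ContDiff ℝ 3 f) (Kf : ℝ)
    (hD3 : ∀ u : En n, ‖iteratedFDeriv ℝ 3 f u‖ ≤ Kf)
    (Φ₀ : ℝ → En n)
    (hΦ₀bdd : ∃ B : ℝ, ∀ ξ, ‖Φ₀ ξ‖ ≤ B)
    (hfΦ₀ : memL2 (fun ξ => f (Φ₀ ξ))) :
    ∃ K > (0:ℝ),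
      ∀ p p' : ℝ → En n, memH1 p p' → h1norm p p' ≤ 1 →
      ∀ v v' : ℝ → En n, memH1 v v' →
      ∀ ψ ψ' : ℝ → En n, memH1 ψ ψ' →
        l2norm (fun ξ => f (Φ₀ ξ + p ξ + v ξ)) ≤
          K * (1 + (h1norm v v')^2 * l2norm v) ∧
        |l2inner (fun ξ => f (Φ₀ ξ + p ξ + v ξ)) ψ| ≤
          K * (1 + h1norm v v' * (l2norm v)^2) * h1norm ψ ψ' := by
  obtain ⟨B, hB⟩ := hΦ₀bdd
  obtain ⟨C, hC0, hC⟩ := exists_norm_sub_le_mul_pow (k := 2) hf hD3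
  set K₀ := l2norm (fun ξ => f (Φ₀ ξ)) + 4 * C * (3 + 2 * B) ^ 2 + 16 * C
  have hK₀ : 0 ≤ K₀ := by have := l2norm_nonneg (fun ξ => f (Φ₀ ξ)); positivity
  refine ⟨K₀ + 1, by linarith, fun p p' hp hp1 v v' hv ψ ψ' hψ => ?_⟩
  have hF := fun ξ => norm_map_add_add_le hC0 hC (hB ξ) (w := v ξ)
    ((hp.norm_le_two_mul_h1norm ξ).trans (by linarith))
  have hN : 0 ≤ h1norm v v' := Real.sqrt_nonneg _
  have ha := l2norm_nonneg v
  constructor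
  · exact (l2norm_le_of_cubic_bound hC0 hfΦ₀ hp hp1 hv hF).trans
      (mul_le_mul_of_nonneg_right (by linarith) (by positivity))
  · refine (abs_l2inner_le_of_cubic_bound hC0 hfΦ₀ hp hp1 hv hψ hF).trans ?_
    exact mul_le_mul_of_nonneg_right (mul_le_mul_of_nonneg_right (by linarith) (by positivity))
      (Real.sqrt_nonneg _)

/-- global bounds on `f(Φ+v)` in `L²` and against `H¹` test functions. -/
theorem statement1 {n : ℕ} (hn : 1 ≤ n) (f : En n → En n)
    (hf : ContDiff ℝ 3 f) (Kf : ℝ) (hKf : 0 < Kf)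
    (hD3 : ∀ u : En n, ‖iteratedFDeriv ℝ 3 f u‖ ≤ Kf)
    (Φ₀ : ℝ → En n) (hΦ₀C1 : ContDiff ℝ 1 Φ₀)
    (hΦ₀bdd : ∃ B : ℝ, ∀ ξ, ‖Φ₀ ξ‖ ≤ B)
    (hΦ₀' : memL2 (deriv Φ₀))
    (hfΦ₀ : memL2 (fun ξ => f (Φ₀ ξ))) :
    ∃ K > (0:ℝ),
      ∀ p p' : ℝ → En n, memH1 p p' → h1norm p p' ≤ 1 →
      ∀ v v' : ℝ → En n, memH1 v v' →
      ∀ ψ ψ' : ℝ → En n, memH1 ψ ψ' →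
        l2norm (fun ξ => f (Φ₀ ξ + p ξ + v ξ)) ≤
          K * (1 + (h1norm v v')^2 * l2norm v) ∧
        |l2inner (fun ξ => f (Φ₀ ξ + p ξ + v ξ)) ψ| ≤
          K * (1 + h1norm v v' * (l2norm v)^2) * h1norm ψ ψ' :=
  statement1_general f hf Kf hD3 Φ₀ hΦ₀bdd hfΦ₀
end
end

section
/- Let n ≥ 1, ρ > 0. Assume (Hf), (HVar) and (Hg), and let Φ_ref : ℝ → ℝⁿ be bounded and measurable with f(Φ_ref) ∈ L² and g(Φ_ref) ∈ L². Then there exist K > 0 and ϑ > 0 such that for all v ∈ H¹: −2ρ‖∂ξv‖_{L²}² + 2⟨f(Φ_ref + v), v⟩_{L²} + ‖g(Φ_ref + v)‖_{L²}² + ϑ‖v‖_{H¹}² ≤ K(1 + ‖v‖_{L²}²). -/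
open MeasureTheory

noncomputable section

/-!
Both nonlinear terms are controlled pointwise by their value at `Φref` plus a term linear
(for `g`) or quadratic (for `⟨f(·), v⟩`) in `v`: the one-sided Lipschitz bound gives
`⟨f(Φref + v), v⟩ ≤ K_var |v|² + ⟨f(Φref), v⟩`, and the Lipschitz bound on `g` gives
`‖g(Φref + v)‖ ≤ K_g ‖v‖ + ‖g(Φref)‖` in `L²`. Integrating, using Cauchy–Schwarz in `L²` and
absorbing the cross terms by Young's inequality, everything is bounded by `K (1 + ‖v‖²)`,
while choosing `ϑ = ρ` lets the diffusion term `-2ρ‖∂ξ v‖²` absorb `ϑ ‖∂ξ v‖²`.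
-/

namespace MeasureTheory

variable {α E : Type*} [MeasurableSpace α] {μ : Measure α}

section InnerProduct

variable [NormedAddCommGroup E] [InnerProductSpace ℝ E]

open scoped RealInnerProductSpace

theorem MemLp.integral_inner_eq_inner_toLp {F V : α → E} (hF : MemLp F 2 μ)
    (hV : MemLp V 2 μ) : ∫ a, ⟪F a, V a⟫ ∂μ = ⟪hF.toLp F, hV.toLp V⟫ := by
  rw [L2.inner_def]
  refine integral_congr_ae ?_
  filter_upwards [hF.coeFn_toLp, hV.coeFn_toLp] with a hFa hVa
  rw [hFa, hVa]

theorem MemLp.integrable_inner {F V : α → E} (hF : MemLp F 2 μ) (hV : MemLp V 2 μ) :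
    Integrable (fun a => ⟪F a, V a⟫) μ := by
  refine (L2.integrable_inner (hF.toLp F) (hV.toLp V)).congr ?_
  filter_upwards [hF.coeFn_toLp, hV.coeFn_toLp] with a hFa hVa
  rw [hFa, hVa]

theorem MemLp.integral_inner_le_lpNorm_mul_lpNorm {F V : α → E} (hF : MemLp F 2 μ)
    (hV : MemLp V 2 μ) : ∫ a, ⟪F a, V a⟫ ∂μ ≤ lpNorm F 2 μ * lpNorm V 2 μ := by
  rw [hF.integral_inner_eq_inner_toLp hV, ← toReal_eLpNorm hF.1, ← toReal_eLpNorm hV.1,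
    ← Lp.norm_toLp F hF, ← Lp.norm_toLp V hV]
  exact real_inner_le_norm _ _

theorem MemLp.integral_norm_sq_eq_lpNorm_sq {V : α → E} (hV : MemLp V 2 μ) :
    ∫ a, ‖V a‖ ^ 2 ∂μ = lpNorm V 2 μ ^ 2 := by
  simp_rw [← real_inner_self_eq_norm_sq]
  rw [hV.integral_inner_eq_inner_toLp hV, real_inner_self_eq_norm_sq, Lp.norm_toLp,
    toReal_eLpNorm hV.1]

theorem inner_apply_add_le_of_inner_sub_le {f : E → E} {K : ℝ}
    (hf : ∀ x y, ⟪f x - f y, x - y⟫ ≤ K * ‖x - y‖ ^ 2) (u w : E) :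
    ⟪f (u + w), w⟫ ≤ K * ‖w‖ ^ 2 + ⟪f u, w⟫ := by
  have h := hf (u + w) u
  rw [add_sub_cancel_left, inner_sub_left] at h
  linarith

/-- When the integrand is not integrable the integral is the junk value `0`, which the
nonnegative right-hand side still bounds. -/
theorem integral_inner_apply_add_le {f : E → E} {K : ℝ}
    (hf : ∀ x y, ⟪f x - f y, x - y⟫ ≤ K * ‖x - y‖ ^ 2) {Φ v : α → E}
    (hfΦ : MemLp (fun a => f (Φ a)) 2 μ) (hv : MemLp v 2 μ) :
    ∫ a, ⟪f (Φ a + v a), v a⟫ ∂μ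
      ≤ |K| * lpNorm v 2 μ ^ 2 + lpNorm (fun a => f (Φ a)) 2 μ * lpNorm v 2 μ := by
  by_cases hint : Integrable (fun a => ⟪f (Φ a + v a), v a⟫) μ
  · have hsq : Integrable (fun a => ‖v a‖ ^ 2) μ :=
      (memLp_two_iff_integrable_sq_norm hv.1).1 hv
    have hpt (a : α) : ⟪f (Φ a + v a), v a⟫ ≤ |K| * ‖v a‖ ^ 2 + ⟪f (Φ a), v a⟫ :=
      (inner_apply_add_le_of_inner_sub_le hf _ _).trans
        (by gcongr; exact le_abs_self K)
    calc ∫ a, ⟪f (Φ a + v a), v a⟫ ∂μ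
        ≤ ∫ a, |K| * ‖v a‖ ^ 2 + ⟪f (Φ a), v a⟫ ∂μ :=
          integral_mono hint ((hsq.const_mul _).add (hfΦ.integrable_inner hv)) hpt
      _ = |K| * lpNorm v 2 μ ^ 2 + ∫ a, ⟪f (Φ a), v a⟫ ∂μ := by
          rw [integral_add (hsq.const_mul _) (hfΦ.integrable_inner hv), integral_const_mul,
            hv.integral_norm_sq_eq_lpNorm_sq]
      _ ≤ _ := by grw [hfΦ.integral_inner_le_lpNorm_mul_lpNorm hv]
  · rw [integral_undef hint]
    exact add_nonneg (by positivity) (mul_nonneg lpNorm_nonneg lpNorm_nonneg)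

end InnerProduct

theorem lpNorm_apply_add_le_of_norm_sub_le {F : Type*} [NormedAddCommGroup E]
    [NormedAddCommGroup F] {p : ENNReal} (hp : 1 ≤ p) {g : E → F} {K : ℝ}
    (hg : ∀ x y, ‖g x - g y‖ ≤ K * ‖x - y‖) {Φ v : α → E}
    (hgΦ : MemLp (fun a => g (Φ a)) p μ) (hv : MemLp v p μ) :
    lpNorm (fun a => g (Φ a + v a)) p μ
      ≤ |K| * lpNorm v p μ + lpNorm (fun a => g (Φ a)) p μ := by
  have hdiff : lpNorm ((fun a => g (Φ a + v a)) - fun a => g (Φ a)) p μ ≤ |K| * lpNorm v p μ :=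
    calc lpNorm ((fun a => g (Φ a + v a)) - fun a => g (Φ a)) p μ
        ≤ lpNorm (fun a => |K| * ‖v a‖) p μ := by
          refine lpNorm_mono_real (hv.norm.const_mul _) fun a => ?_
          have h := hg (Φ a + v a) (Φ a)
          rw [add_sub_cancel_left] at h
          simpa using h.trans (by gcongr; exact le_abs_self K)
      _ = |K| * lpNorm v p μ := by
          have h := lpNorm_const_smul |K| (fun a => ‖v a‖) (p := p) μ
          rw [lpNorm_norm hv.1] at h
          simpa [Pi.smul_def] using h
  linarith [lpNorm_le_lpNorm_add_lpNorm_sub' (f := fun a => g (Φ a + v a)) hgΦ hp]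

end MeasureTheory

theorem statement9_general {n : ℕ} (ρ : ℝ) (hρ : 0 < ρ)
    (f g : En n → En n)
    (Kvar : ℝ)
    (hVar : ∀ uA uB : En n, (inner ℝ (f uA - f uB) (uA - uB) : ℝ) ≤ Kvar * ‖uA - uB‖^2)
    (Kg : ℝ)
    (hgLip : ∀ uA uB : En n, ‖g uA - g uB‖ ≤ Kg * ‖uA - uB‖)
    (Φref : ℝ → En n) (hmeas : Measurable Φref)
    (hfΦref : memL2 (fun ξ => f (Φref ξ)))
    (hgΦref : memL2 (fun ξ => g (Φref ξ))) :
    ∃ K > (0:ℝ), ∃ ϑ > (0:ℝ), ∀ v v' : ℝ → En n, memH1 v v' →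
      -2*ρ*(l2norm v')^2
      + 2 * l2inner (fun ξ => f (Φref ξ + v ξ)) v
      + (l2norm (fun ξ => g (Φref ξ + v ξ)))^2
      + ϑ * (h1norm v v')^2
      ≤ K * (1 + (l2norm v)^2) := by
  set A := lpNorm (fun ξ => f (Φref ξ)) 2 volume
  set B := lpNorm (fun ξ => g (Φref ξ)) 2 volume
  -- `f`-term: `2|K_var|‖v‖² + A² + ‖v‖²`; `g`-term: `2K_g²‖v‖² + 2B²`; `ϑ = ρ` adds `ρ‖v‖²`.
  refine ⟨2 * |Kvar| + 2 * Kg ^ 2 + ρ + 1 + A ^ 2 + 2 * B ^ 2, by positivity, ρ, hρ, ?_⟩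
  rintro v v' ⟨-, hv, hv'⟩
  have hg_cont : Continuous g :=
    (LipschitzWith.of_dist_le' (by simpa only [dist_eq_norm] using hgLip)).continuous
  have hgv_meas : AEStronglyMeasurable (fun ξ => g (Φref ξ + v ξ)) volume :=
    hg_cont.comp_aestronglyMeasurable (hmeas.aestronglyMeasurable.add hv.1)
  have hf_term := integral_inner_apply_add_le hVar hfΦref hv
  have hg_term := lpNorm_apply_add_le_of_norm_sub_le one_le_two hgLip hgΦref hv
  rw [l2inner, h1norm, Real.sq_sqrt (by positivity), l2norm, l2norm, l2norm,
    toReal_eLpNorm hv.1, toReal_eLpNorm hv'.1, toReal_eLpNorm hgv_meas]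
  set a := lpNorm v 2 volume
  set G := lpNorm (fun ξ => g (Φref ξ + v ξ)) 2 volume
  have ha : 0 ≤ a := lpNorm_nonneg
  have hG : 0 ≤ G := lpNorm_nonneg
  nlinarith [abs_nonneg Kvar, abs_nonneg Kg, sq_abs Kg, sq_nonneg (A - a),
    sq_nonneg (|Kg| * a - B), mul_nonneg (add_nonneg (sq_nonneg A) (sq_nonneg B)) (sq_nonneg a)]

/-- the coercivity estimate used for the variational framework. -/
theorem statement9 {n : ℕ} (hn : 1 ≤ n) (ρ : ℝ) (hρ : 0 < ρ)
    (f g : En n → En n)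
    (hf : ContDiff ℝ 3 f) (Kf : ℝ) (hKf : 0 < Kf)
    (hD3 : ∀ u : En n, ‖iteratedFDeriv ℝ 3 f u‖ ≤ Kf)
    (Kvar : ℝ) (hKvar : 0 < Kvar)
    (hVar : ∀ uA uB : En n, (inner ℝ (f uA - f uB) (uA - uB) : ℝ) ≤ Kvar * ‖uA - uB‖^2)
    (Kg : ℝ) (hKg : 0 < Kg)
    (hgLip : ∀ uA uB : En n, ‖g uA - g uB‖ ≤ Kg * ‖uA - uB‖)
    (Φref : ℝ → En n) (hmeas : Measurable Φref)
    (hbdd : ∃ B : ℝ, ∀ ξ, ‖Φref ξ‖ ≤ B)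
    (hfΦref : memL2 (fun ξ => f (Φref ξ)))
    (hgΦref : memL2 (fun ξ => g (Φref ξ))) :
    ∃ K > (0:ℝ), ∃ ϑ > (0:ℝ), ∀ v v' : ℝ → En n, memH1 v v' →
      -2*ρ*(l2norm v')^2
      + 2 * l2inner (fun ξ => f (Φref ξ + v ξ)) v
      + (l2norm (fun ξ => g (Φref ξ + v ξ)))^2
      + ϑ * (h1norm v v')^2
      ≤ K * (1 + (l2norm v)^2) :=
  statement9_general ρ hρ f g Kvar hVar Kg hgLip Φref hmeas hfΦref hgΦref
end
end

section
/- Let α ≥ 0, ε > 0 and β > 0 satisfy ν := α + ε < 2β. Then for every measurable function h : [0,∞) → [0,∞) and every t ≥ 0: e^{αt} (∫₀ᵗ e^{−β(t−s)} h(s) ds)² ≤ (2β − ν)^{-1} ∫₀ᵗ e^{−ε(t−s)} e^{αs} h(s)² ds. -/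
/-!
Write `c = 2β - (α + ε) > 0` and split the integrand of the left side as
`e^{-c(t-s)/2} · e^{αt/2 - (α+ε)(t-s)/2} h(s)`. By Cauchy–Schwarz, the squared integral is at most
`∫ e^{-c(t-s)} ds · ∫ e^{-ε(t-s)} e^{αs} h(s)² ds`, and the first factor is at most
`∫_{-∞}^t e^{-c(t-s)} ds = c⁻¹`.
-/

open MeasureTheory Real Set

theorem ENNReal.ofReal_sq_le (x : ℝ) : ENNReal.ofReal x ^ 2 ≤ ENNReal.ofReal (x ^ 2) := by
  rcases le_total 0 x with hx | hx
  · rw [ENNReal.ofReal_pow hx]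
  · simp [ENNReal.ofReal_of_nonpos hx]

theorem ENNReal.sq_lintegral_mul_le {α : Type*} [MeasurableSpace α] {μ : Measure α}
    {f g : α → ENNReal} (hf : AEMeasurable f μ) (hg : AEMeasurable g μ) :
    (∫⁻ a, f a * g a ∂μ) ^ 2 ≤ (∫⁻ a, f a ^ 2 ∂μ) * ∫⁻ a, g a ^ 2 ∂μ := by
  have := ENNReal.lintegral_mul_le_Lp_mul_Lq μ Real.HolderConjugate.two_two hf hg
  simp only [Pi.mul_apply, ENNReal.rpow_two] at this
  calc (∫⁻ a, f a * g a ∂μ) ^ 2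
      ≤ ((∫⁻ a, f a ^ 2 ∂μ) ^ (1 / 2 : ℝ) * (∫⁻ a, g a ^ 2 ∂μ) ^ (1 / 2 : ℝ)) ^ 2 := by
        gcongr
    _ = (∫⁻ a, f a ^ 2 ∂μ) * ∫⁻ a, g a ^ 2 ∂μ := by
        rw [mul_pow, ← ENNReal.rpow_two, ← ENNReal.rpow_two, ← ENNReal.rpow_mul,
          ← ENNReal.rpow_mul]
        norm_num

theorem lintegral_Iic_exp_neg_mul_sub {c : ℝ} (hc : 0 < c) (t : ℝ) :
    ∫⁻ s in Iic t, ENNReal.ofReal (exp (-c * (t - s))) = ENNReal.ofReal c⁻¹ := by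
  have hsplit : (fun s => exp (-c * (t - s))) = fun s => exp (-c * t) * exp (c * s) := by
    ext s; rw [← exp_add]; ring_nf
  have hint : IntegrableOn (fun s => exp (-c * (t - s))) (Iic t) := by
    rw [hsplit]; exact (integrableOn_exp_mul_Iic hc t).const_mul _
  rw [← ofReal_integral_eq_lintegral_ofReal hint (ae_of_all _ fun _ => (exp_pos _).le), hsplit,
    integral_const_mul, integral_exp_mul_Iic hc, mul_div_assoc', ← exp_add]
  simp

theorem lintegral_Ioc_exp_neg_mul_sub_le {c : ℝ} (hc : 0 < c) (a t : ℝ) :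
    ∫⁻ s in Ioc a t, ENNReal.ofReal (exp (-c * (t - s))) ≤ ENNReal.ofReal c⁻¹ :=
  lintegral_Iic_exp_neg_mul_sub hc t ▸ lintegral_mono_set Ioc_subset_Iic_self

theorem statement18_general (α ε β : ℝ)
    (hν : α + ε < 2*β)
    (h : ℝ → ℝ) (hmeas : Measurable h)
    (t : ℝ) :
    ENNReal.ofReal (Real.exp (α*t)) *
      (∫⁻ s in Set.Ioc (0:ℝ) t, ENNReal.ofReal (Real.exp (-β*(t-s)) * h s))^2
    ≤ ENNReal.ofReal (2*β - (α + ε))⁻¹ *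
      ∫⁻ s in Set.Ioc (0:ℝ) t,
        ENNReal.ofReal (Real.exp (-ε*(t-s)) * Real.exp (α*s) * (h s)^2) := by
  set c := 2*β - (α + ε)
  let f : ℝ → ENNReal := fun s => ENNReal.ofReal (exp (-(c / 2) * (t - s)))
  let g : ℝ → ENNReal := fun s => ENNReal.ofReal (exp (α * t / 2 - (α + ε) / 2 * (t - s)) * h s)
  have hfg (s : ℝ) : f s * g s =
      ENNReal.ofReal (exp (α * t / 2)) * ENNReal.ofReal (exp (-β * (t - s)) * h s) := by
    rw [← ENNReal.ofReal_mul (exp_pos _).le, ← ENNReal.ofReal_mul (exp_pos _).le, ← mul_assoc,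
      ← mul_assoc, ← exp_add, ← exp_add]
    simp only [c]
    ring_nf
  have hf (s : ℝ) : f s ^ 2 = ENNReal.ofReal (exp (-c * (t - s))) := by
    rw [← ENNReal.ofReal_pow (exp_pos _).le, ← exp_nat_mul]
    ring_nf
  have hg (s : ℝ) : g s ^ 2 ≤ ENNReal.ofReal (exp (-ε * (t - s)) * exp (α * s) * h s ^ 2) := by
    refine (ENNReal.ofReal_sq_le _).trans_eq ?_
    rw [mul_pow, ← exp_nat_mul, ← exp_add]
    ring_nf
  calc ENNReal.ofReal (exp (α * t)) *
        (∫⁻ s in Ioc 0 t, ENNReal.ofReal (exp (-β * (t - s)) * h s)) ^ 2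
      = (∫⁻ s in Ioc 0 t, f s * g s) ^ 2 := by
        rw [lintegral_congr hfg, lintegral_const_mul' _ _ ENNReal.ofReal_ne_top, mul_pow,
          ← ENNReal.ofReal_pow (exp_pos _).le, ← exp_nat_mul]
        ring_nf
    _ ≤ (∫⁻ s in Ioc 0 t, f s ^ 2) * ∫⁻ s in Ioc 0 t, g s ^ 2 :=
        ENNReal.sq_lintegral_mul_le (by fun_prop) (by fun_prop)
    _ ≤ ENNReal.ofReal c⁻¹ *
          ∫⁻ s in Ioc 0 t, ENNReal.ofReal (exp (-ε * (t - s)) * exp (α * s) * h s ^ 2) := by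
        gcongr with s
        · simpa only [hf] using lintegral_Ioc_exp_neg_mul_sub_le (by linarith) 0 t
        · exact hg s

/-- the weighted convolution estimate for the exponentially decaying
kernel.  Both sides live in the extended reals. -/
theorem statement18 (α ε β : ℝ) (hα : 0 ≤ α) (hε : 0 < ε) (hβ : 0 < β)
    (hν : α + ε < 2*β)
    (h : ℝ → ℝ) (hmeas : Measurable h) (hnonneg : ∀ s, 0 ≤ h s)
    (t : ℝ) (ht : 0 ≤ t) :
    ENNReal.ofReal (Real.exp (α*t)) *
      (∫⁻ s in Set.Ioc (0:ℝ) t, ENNReal.ofReal (Real.exp (-β*(t-s)) * h s))^2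
    ≤ ENNReal.ofReal (2*β - (α + ε))⁻¹ *
      ∫⁻ s in Set.Ioc (0:ℝ) t,
        ENNReal.ofReal (Real.exp (-ε*(t-s)) * Real.exp (α*s) * (h s)^2) :=
  statement18_general α ε β hν h hmeas t
end
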